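/- Let 𝒰_n(ℝ) denote the group of upper unitriangular n×n real matrices, and let f : ℝ_{≥0} → 𝒰_n(ℝ) be a map with entries f_{i,j} : ℝ_{≥0} → ℝ for 1 ≤ i < j ≤ n (diagonal entries 1, entries below the diagonal 0). Then f is a continuous polynomial map (from the additive semigroup ℝ_{≥0} to the group 𝒰_n(ℝ)) if and only if every entry f_{i,j}, 1 ≤ i < j ≤ n, is a real polynomial function of t. -/

import Mathlib

namespace PaperPoly

/-- `DegLE d f` means that `f : S → G` is a polynomial map of degree at most `d ∈ ℕ`:
the base case `DegLE 0 f` means `f` is constant, and `DegLE (d+1) f` means that for every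
`s : S` both difference maps `L_s f : t ↦ f (s+t) * (f t)⁻¹` and
`R_s f : t ↦ (f t)⁻¹ * f (s+t)` satisfy `DegLE d`. -/
def DegLE {S : Type*} [AddCommSemigroup S] {G : Type*} [Group G] : ℕ → (S → G) → Prop
  | 0 => fun f => ∀ t t' : S, f t = f t'
  | d + 1 => fun f => ∀ s : S,
      DegLE d (fun t => f (s + t) * (f t)⁻¹) ∧ DegLE d (fun t => (f t)⁻¹ * f (s + t))

/-- `f` is a polynomial map (of some finite degree). -/
def IsPoly {S : Type*} [AddCommSemigroup S] {G : Type*} [Group G] (f : S → G) : Prop :=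
  ∃ d : ℕ, DegLE d f

open Matrix

/-- The group `𝒰 n (ℝ)` of upper unitriangular `n × n` real matrices, as a subgroup of the
units of the matrix ring: invertible matrices with `1`'s on the diagonal and `0`'s below
the diagonal. -/
def UpperUnitriangular (n : ℕ) : Subgroup (Matrix (Fin n) (Fin n) ℝ)ˣ where
  carrier := {A | ∀ i j : Fin n, j ≤ i →
    (A : Matrix (Fin n) (Fin n) ℝ) i j = if i = j then 1 else 0}
  one_mem' := by
    intro i j hji
    simp [Matrix.one_apply, eq_comm]
  mul_mem' := by
    intro A B hA hB i j hji
    rw [Units.val_mul, Matrix.mul_apply, Finset.sum_eq_single i]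
    · have h1 : (A : Matrix (Fin n) (Fin n) ℝ) i i = 1 := by simpa using hA i i le_rfl
      rw [h1, one_mul, hB i j hji]
    · intro b _ hbi
      rcases le_or_gt b i with hb | hb
      · have hzero : (A : Matrix (Fin n) (Fin n) ℝ) i b = 0 := by
          have := hA i b hb
          rwa [if_neg (fun h => hbi h.symm)] at this
        rw [hzero, zero_mul]
      · have hzero : (B : Matrix (Fin n) (Fin n) ℝ) b j = 0 := by
          have hjb : j ≤ b := le_of_lt (lt_of_le_of_lt hji hb)
          have := hB b j hjb
          rwa [if_neg (lt_of_le_of_lt hji hb).ne'] at this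
        rw [hzero, mul_zero]
    · intro h
      exact absurd (Finset.mem_univ i) h
  inv_mem' := by
    intro A hA
    -- the underlying matrix is block triangular (upper triangular)
    have hbt : (A : Matrix (Fin n) (Fin n) ℝ).BlockTriangular id := by
      intro i j hij
      have := hA i j (le_of_lt hij)
      have hne : i ≠ j := by
        intro h
        rw [h] at hij
        exact lt_irrefl _ hij
      rwa [if_neg hne] at this
    haveI : Invertible (A : Matrix (Fin n) (Fin n) ℝ) := A.invertible
    have hbtinv : ((A : Matrix (Fin n) (Fin n) ℝ)⁻¹).BlockTriangular id :=
      blockTriangular_inv_of_blockTriangular hbt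
    have hcoe : ((A⁻¹ : (Matrix (Fin n) (Fin n) ℝ)ˣ) : Matrix (Fin n) (Fin n) ℝ)
        = (A : Matrix (Fin n) (Fin n) ℝ)⁻¹ := Matrix.coe_units_inv A
    intro i j hji
    rcases eq_or_lt_of_le hji with rfl | hlt
    · rw [if_pos rfl, hcoe]
      -- diagonal entry of the inverse is 1
      have hmul : (A : Matrix (Fin n) (Fin n) ℝ) * (A : Matrix (Fin n) (Fin n) ℝ)⁻¹ = 1 :=
        Matrix.mul_inv_of_invertible _
      have := congrArg (fun M => M j j) hmul
      simp only [Matrix.mul_apply, Matrix.one_apply_eq] at this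
      rw [Finset.sum_eq_single j] at this
      · have h1 : (A : Matrix (Fin n) (Fin n) ℝ) j j = 1 := by simpa using hA j j le_rfl
        rwa [h1, one_mul] at this
      · intro b _ hbj
        rcases le_or_gt b j with hb | hb
        · have hzero : (A : Matrix (Fin n) (Fin n) ℝ) j b = 0 := by
            have := hA j b hb
            rwa [if_neg (fun h => hbj h.symm)] at this
          rw [hzero, zero_mul]
        · have hzero : (A : Matrix (Fin n) (Fin n) ℝ)⁻¹ b j = 0 := hbtinv hb
          rw [hzero, mul_zero]
      · intro h
        exact absurd (Finset.mem_univ j) h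
    · rw [if_neg hlt.ne', hcoe]
      exact hbtinv hlt

/-!
Write `L_s f (t) = f (s + t) * (f t)⁻¹`. Comparing entries in `f (s + t) = L_s f (t) * f t`
gives, for `i < j`,
`f_{ij} (s + t) - f_{ij} t = (L_s f)_{ij} t + ∑_{i < k < j} (L_s f)_{ik} t * f_{kj} t`.

If every `f_{ij}` is a polynomial of degree `< c (j - i)`, this identity shows by induction on
`j - i` that `(L_s f)_{ij}` has degree `< c (j - i) - 1`, and the same holds for
`R_s f (t) = (f t)⁻¹ * f (s + t)`; after `c n` differencing steps everything is constant.

Conversely, if `f` is continuous and polynomial, the entries of `L_s f` are polynomial by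
induction on the degree, so by the identity every difference `f_{ij} (s + ·) - f_{ij}` is
polynomial. A continuous `h` all of whose differences are polynomial is polynomial: subtracting
an antidifference of `h (1 + ·) - h` leaves a continuous `1`-periodic, hence bounded, function
`φ`; every difference of `φ` is then a periodic polynomial, hence a constant, which must vanish
because `φ` is bounded.
-/

open Polynomial Finset Topology
open scoped NNReal

section Polynomial

variable {R : Type*}

theorem taylor_sub_mem_degreeLT [CommRing R] {p : R[X]} {b : ℕ} (hp : p ∈ R[X]_b) (r : R) :
    taylor r p - p ∈ R[X]_(b - 1) := by
  rw [mem_degreeLT, degree_lt_iff_coeff_zero]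
  intro m hm
  have hdeg : p.natDegree ≤ m := by
    rcases eq_or_ne p 0 with rfl | hp0
    · simp
    · have := (natDegree_lt_iff_degree_lt hp0).2 (mem_degreeLT.1 hp)
      omega
  rcases hdeg.eq_or_lt with rfl | hlt
  · rw [coeff_sub, coeff_taylor_natDegree, leadingCoeff, sub_self]
  · rw [coeff_sub, coeff_eq_zero_of_natDegree_lt (by rwa [natDegree_taylor]),
      coeff_eq_zero_of_natDegree_lt hlt, sub_self]

theorem mul_mem_degreeLT [Semiring R] {p q : R[X]} {a b : ℕ} (hp : p ∈ R[X]_a) (hq : q ∈ R[X]_b) :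
    p * q ∈ R[X]_(a + b - 1) := by
  rcases eq_or_ne p 0 with rfl | hp0
  · simp
  rcases eq_or_ne q 0 with rfl | hq0
  · simp
  have ha := (natDegree_lt_iff_degree_lt hp0).2 (mem_degreeLT.1 hp)
  have hb := (natDegree_lt_iff_degree_lt hq0).2 (mem_degreeLT.1 hq)
  have hpq := natDegree_mul_le (p := p) (q := q)
  exact mem_degreeLT.2 (degree_le_natDegree.trans_lt (Nat.cast_lt.2 (by omega)))

theorem exists_comp_one_add_X_sub_eq {K : Type*} [Field K] [CharZero K] (p : K[X]) :
    ∃ q : K[X], q.comp (1 + X) - q = p := by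
  induction p using Polynomial.induction_on' with
  | add p q hp hq =>
    obtain ⟨P, hP⟩ := hp
    obtain ⟨Q, hQ⟩ := hq
    exact ⟨P + Q, by rw [add_comp, ← hP, ← hQ]; ring⟩
  | monomial k a =>
    set B := (Polynomial.bernoulli (k + 1)).map (algebraMap ℚ K)
    have hB : B.comp (1 + X) = B + C ((k : K) + 1) * X ^ k := by
      simpa [B, map_comp] using
        congrArg (map (algebraMap ℚ K)) (bernoulli_comp_one_add_X (k + 1))
    refine ⟨C (a / (k + 1)) * B, ?_⟩
    rw [mul_comp, C_comp, hB, mul_add, add_sub_cancel_left, ← mul_assoc, ← C_mul,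
      div_mul_cancel₀ _ (Nat.cast_add_one_ne_zero k), C_mul_X_pow_eq_monomial]

end Polynomial

section PolynomialFunction

noncomputable def polyFun : Subalgebra ℝ (ℝ≥0 → ℝ) := (aeval ((↑) : ℝ≥0 → ℝ)).range

/-- Bounding the degree strictly makes `b = 0` the zero function, so that differencing lowers
`b` by one and products land in `a + b - 1` without case distinctions. -/
noncomputable def polyFunDegLT (b : ℕ) : Submodule ℝ (ℝ≥0 → ℝ) :=
  (ℝ[X]_b).map (aeval ((↑) : ℝ≥0 → ℝ)).toLinearMap

theorem mem_polyFun {h : ℝ≥0 → ℝ} :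
    h ∈ polyFun ↔ ∃ p : ℝ[X], ∀ t : ℝ≥0, h t = p.eval (t : ℝ) := by
  constructor
  · rintro ⟨p, rfl⟩
    exact ⟨p, fun t => by simp⟩
  · rintro ⟨p, hp⟩
    exact ⟨p, funext fun t => by simp [hp]⟩

theorem mem_polyFunDegLT {h : ℝ≥0 → ℝ} {b : ℕ} :
    h ∈ polyFunDegLT b ↔ ∃ p ∈ ℝ[X]_b, ∀ t : ℝ≥0, h t = p.eval (t : ℝ) := by
  constructor
  · rintro ⟨p, hp, rfl⟩
    exact ⟨p, hp, fun t => by simp⟩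
  · rintro ⟨p, hp, hph⟩
    exact ⟨p, hp, funext fun t => by simp [hph]⟩

theorem const_mem_polyFun (c : ℝ) : (fun _ => c) ∈ polyFun :=
  polyFun.algebraMap_mem c

theorem shift_mem_polyFun {h : ℝ≥0 → ℝ} (hh : h ∈ polyFun) (s : ℝ≥0) :
    (fun t => h (s + t)) ∈ polyFun := by
  obtain ⟨p, hp⟩ := mem_polyFun.1 hh
  exact mem_polyFun.2 ⟨taylor (s : ℝ) p, fun t => by simp [hp, taylor_eval, add_comm]⟩

theorem continuous_of_mem_polyFun {h : ℝ≥0 → ℝ} (hh : h ∈ polyFun) : Continuous h := by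
  obtain ⟨p, hp⟩ := mem_polyFun.1 hh
  rw [funext hp]
  exact p.continuous.comp NNReal.continuous_coe

theorem exists_mem_polyFunDegLT {h : ℝ≥0 → ℝ} (hh : h ∈ polyFun) :
    ∃ b, h ∈ polyFunDegLT b := by
  obtain ⟨p, hp⟩ := mem_polyFun.1 hh
  exact ⟨p.natDegree + 1, mem_polyFunDegLT.2
    ⟨p, mem_degreeLT.2 (degree_le_natDegree.trans_lt (Nat.cast_lt.2 p.natDegree.lt_succ_self)),
      hp⟩⟩

theorem polyFunDegLT_mono : Monotone polyFunDegLT :=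
  fun _ _ hab => Submodule.map_mono (degreeLT_mono hab)

theorem mul_mem_polyFunDegLT {h g : ℝ≥0 → ℝ} {a b : ℕ} (hh : h ∈ polyFunDegLT a)
    (hg : g ∈ polyFunDegLT b) : h * g ∈ polyFunDegLT (a + b - 1) := by
  obtain ⟨p, hp, rfl⟩ := hh
  obtain ⟨q, hq, rfl⟩ := hg
  exact ⟨p * q, mul_mem_degreeLT hp hq, map_mul (aeval _) p q⟩

theorem shift_sub_mem_polyFunDegLT {h : ℝ≥0 → ℝ} {b : ℕ} (hh : h ∈ polyFunDegLT b)
    (s : ℝ≥0) : (fun t => h (s + t) - h t) ∈ polyFunDegLT (b - 1) := by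
  obtain ⟨p, hp, hph⟩ := mem_polyFunDegLT.1 hh
  refine mem_polyFunDegLT.2 ⟨taylor (s : ℝ) p - p, taylor_sub_mem_degreeLT hp s, fun t => ?_⟩
  simp [hph, taylor_eval, add_comm]

theorem eq_of_mem_polyFunDegLT_one {h : ℝ≥0 → ℝ} (hh : h ∈ polyFunDegLT 1) (t t' : ℝ≥0) :
    h t = h t' := by
  obtain ⟨p, hp, hph⟩ := mem_polyFunDegLT.1 hh
  have hC := eq_C_of_degree_le_zero
    (Nat.WithBot.lt_one_iff_le_zero.1 (by exact_mod_cast mem_degreeLT.1 hp))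
  rw [hph, hph, hC, eval_C, eval_C]

theorem exists_bound_of_periodic {φ : ℝ≥0 → ℝ} (hc : Continuous φ)
    (hper : ∀ t, φ (1 + t) = φ t) : ∃ M, ∀ t, |φ t| ≤ M := by
  obtain ⟨M, hM⟩ := (isCompact_Icc (a := (0 : ℝ≥0)) (b := 1)).exists_bound_of_continuousOn
    hc.continuousOn
  refine ⟨M, fun t => ?_⟩
  have hnat : ∀ (m : ℕ) x, φ (m + x) = φ x := by
    intro m x
    induction m with
    | zero => simp
    | succ m ih => rw [Nat.cast_succ, add_comm (m : ℝ≥0), add_assoc, hper, ih]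
  have hfloor : (⌊t⌋₊ : ℝ≥0) ≤ t := Nat.floor_le t.2
  rw [← tsub_add_cancel_of_le hfloor, add_comm, hnat]
  refine hM _ ⟨zero_le, tsub_le_iff_left.2 ?_⟩
  simpa [add_comm] using (Nat.lt_floor_add_one t).le

theorem eq_zero_of_bounded_of_shift_eq_add {φ : ℝ≥0 → ℝ} {M c : ℝ} (hM : ∀ t, |φ t| ≤ M)
    {s : ℝ≥0} (hs : ∀ t, φ (s + t) = φ t + c) : c = 0 := by
  have hmul : ∀ m : ℕ, φ (m * s) = φ 0 + m * c := by
    intro m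
    induction m with
    | zero => simp
    | succ m ih => rw [Nat.cast_succ, add_one_mul, add_comm, hs, ih]; push_cast; ring
  by_contra hc
  obtain ⟨m, hm⟩ := exists_nat_gt (2 * M / |c|)
  have h1 : (m : ℝ) * |c| ≤ 2 * M :=
    calc (m : ℝ) * |c| = |φ (m * s) - φ 0| := by rw [hmul m]; simp [abs_mul]
      _ ≤ |φ (m * s)| + |φ 0| := abs_sub _ _
      _ ≤ 2 * M := by linarith [hM (m * s), hM 0]
  rw [div_lt_iff₀ (abs_pos.2 hc)] at hm
  linarith

theorem eq_of_mem_polyFun_of_periodic {ψ : ℝ≥0 → ℝ} (hψ : ψ ∈ polyFun)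
    (hper : ∀ t, ψ (1 + t) = ψ t) (t : ℝ≥0) : ψ t = ψ 0 := by
  obtain ⟨r, hr⟩ := mem_polyFun.1 hψ
  have hnat : ∀ m : ℕ, r.eval (m : ℝ) = (C (ψ 0)).eval (m : ℝ) := by
    intro m
    induction m with
    | zero => simp [hr]
    | succ m ih =>
      have := hper m
      rw [hr, hr] at this
      push_cast at this ⊢
      rw [add_comm, this, ih, eval_C, eval_C]
  have hconst : r = C (ψ 0) := eq_of_infinite_eval_eq _ _
    (Set.infinite_of_injective_forall_mem Nat.cast_injective hnat)
  rw [hr, hconst, eval_C]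

theorem mem_polyFun_of_forall_shift_sub_mem {h : ℝ≥0 → ℝ} (hc : Continuous h)
    (hΔ : ∀ s, (fun t => h (s + t) - h t) ∈ polyFun) : h ∈ polyFun := by
  obtain ⟨p, hp⟩ := mem_polyFun.1 (hΔ 1)
  obtain ⟨q, hq⟩ := exists_comp_one_add_X_sub_eq p
  have hqpoly : (fun t : ℝ≥0 => q.eval (t : ℝ)) ∈ polyFun := mem_polyFun.2 ⟨q, fun _ => rfl⟩
  set φ : ℝ≥0 → ℝ := fun t => h t - q.eval (t : ℝ) with hφ
  have hper : ∀ t, φ (1 + t) = φ t := by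
    intro t
    have := congrArg (eval (t : ℝ)) hq
    simp only [eval_sub, eval_comp, eval_add, eval_one, eval_X] at this
    simp only [hφ, NNReal.coe_add, NNReal.coe_one]
    linarith [hp t]
  obtain ⟨M, hM⟩ := exists_bound_of_periodic (hc.sub (continuous_of_mem_polyFun hqpoly)) hper
  have hconst : ∀ s, φ s = φ 0 := by
    intro s
    have hpoly : (fun t => φ (s + t) - φ t) ∈ polyFun := by
      convert sub_mem (hΔ s) (sub_mem (shift_mem_polyFun hqpoly s) hqpoly) using 2 with t
      simp only [hφ, Pi.sub_apply]
      ring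
    have hshift : ∀ t, φ (s + t) = φ t + (φ s - φ 0) := by
      intro t
      have := eq_of_mem_polyFun_of_periodic hpoly
        (fun t => by simp only [add_left_comm s 1, hper]) t
      simp only [add_zero] at this
      linarith
    linarith [eq_zero_of_bounded_of_shift_eq_add hM hshift]
  refine mem_polyFun.2 ⟨q + C (φ 0), fun t => ?_⟩
  rw [eval_add, eval_C, ← hconst t, hφ]
  ring

end PolynomialFunction

theorem Matrix.isEmbedding_units_val {m 𝕜 : Type*} [Fintype m] [DecidableEq m] [Field 𝕜]
    [TopologicalSpace 𝕜] [IsTopologicalRing 𝕜] [ContinuousInv₀ 𝕜] :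
    IsEmbedding (Units.val : (Matrix m m 𝕜)ˣ → Matrix m m 𝕜) := by
  refine Units.isEmbedding_val_mk' (f := Inv.inv) (fun A hA => ?_)
    fun u => (Matrix.coe_units_inv u).symm
  refine (continuousAt_matrix_inv A ?_).continuousWithinAt
  rw [Ring.inverse_eq_inv']
  exact continuousAt_inv₀ (Matrix.isUnit_iff_isUnit_det A |>.1 hA).ne_zero

namespace UpperUnitriangular

variable {n : ℕ}

abbrev toMatrix (A : UpperUnitriangular n) : Matrix (Fin n) (Fin n) ℝ :=
  ((A : (Matrix (Fin n) (Fin n) ℝ)ˣ) : Matrix (Fin n) (Fin n) ℝ)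

theorem toMatrix_apply_self (A : UpperUnitriangular n) (i : Fin n) : toMatrix A i i = 1 := by
  simpa using A.2 i i le_rfl

theorem toMatrix_apply_of_lt (A : UpperUnitriangular n) {i j : Fin n} (h : j < i) :
    toMatrix A i j = 0 := by
  simpa [h.ne'] using A.2 i j h.le

theorem toMatrix_mul (A B : UpperUnitriangular n) :
    toMatrix (A * B) = toMatrix A * toMatrix B :=
  rfl

theorem toMatrix_mul_apply_of_lt (A B : UpperUnitriangular n) {i j : Fin n} (h : i < j) :
    toMatrix (A * B) i j =
      toMatrix A i j + toMatrix B i j + ∑ k ∈ Ioo i j, toMatrix A i k * toMatrix B k j := by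
  rw [toMatrix_mul, Matrix.mul_apply, ← sum_subset (subset_univ (Icc i j))]
  · rw [← add_sum_Ioc_eq_sum_Icc h.le, ← sum_Ioo_add_eq_sum_Ioc h,
      toMatrix_apply_self, toMatrix_apply_self]
    ring
  · intro k _ hk
    rcases lt_or_ge k i with hki | hik
    · rw [toMatrix_apply_of_lt A hki, zero_mul]
    · rw [toMatrix_apply_of_lt B (lt_of_not_ge fun hkj => hk (mem_Icc.2 ⟨hik, hkj⟩)),
        mul_zero]

theorem ext_toMatrix {A B : UpperUnitriangular n}
    (h : ∀ i j, i < j → toMatrix A i j = toMatrix B i j) : A = B := by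
  refine Subtype.ext (Units.ext (Matrix.ext fun i j => ?_))
  rcases lt_trichotomy i j with hij | rfl | hji
  · exact h i j hij
  · exact (toMatrix_apply_self A i).trans (toMatrix_apply_self B i).symm
  · exact (toMatrix_apply_of_lt A hji).trans (toMatrix_apply_of_lt B hji).symm

theorem continuous_iff {X : Type*} [TopologicalSpace X] {f : X → UpperUnitriangular n} :
    Continuous f ↔ ∀ i j, Continuous fun x => toMatrix (f x) i j := by
  rw [(Matrix.isEmbedding_units_val.comp IsEmbedding.subtypeVal).continuous_iff]
  exact ⟨fun h i j => h.matrix_elem i j, continuous_matrix⟩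

theorem toMatrix_apply_mem_polyFun_of_not_lt (f : ℝ≥0 → UpperUnitriangular n) {i j : Fin n}
    (h : ¬i < j) : (fun t => toMatrix (f t) i j) ∈ polyFun := by
  simp_rw [show ∀ t, toMatrix (f t) i j = if i = j then 1 else 0 from
    fun t => (f t).2 i j (not_lt.1 h)]
  exact const_mem_polyFun _

theorem toMatrix_apply_mem_polyFun_of_degLE {d : ℕ} {f : ℝ≥0 → UpperUnitriangular n}
    (hc : Continuous f) (hf : DegLE d f) (i j : Fin n) :
    (fun t => toMatrix (f t) i j) ∈ polyFun := by
  induction d generalizing f i j with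
  | zero =>
    simp_rw [hf _ 0]
    exact const_mem_polyFun _
  | succ d ih =>
    have hg : ∀ s i k, (fun t => toMatrix (f (s + t) * (f t)⁻¹) i k) ∈ polyFun := fun s =>
      ih ((hc.comp (continuous_const.add continuous_id)).mul hc.inv) (hf s).1
    induction i using WellFoundedGT.induction generalizing j with | ind i ihi => ?_
    by_cases hij : i < j
    swap
    · exact toMatrix_apply_mem_polyFun_of_not_lt f hij
    refine mem_polyFun_of_forall_shift_sub_mem (continuous_iff.1 hc i j) fun s => ?_
    convert add_mem (hg s i j) (sum_mem fun k hk =>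
      mul_mem (hg s i k) (ihi k (mem_Ioo.1 hk).1 j)) using 1
    funext t
    have := toMatrix_mul_apply_of_lt (f (s + t) * (f t)⁻¹) (f t) hij
    rw [inv_mul_cancel_right] at this
    simp only [this, Pi.add_apply, Finset.sum_apply, Pi.mul_apply]
    ring

def EntryDegLT (B : ℕ → ℕ) (f : ℝ≥0 → UpperUnitriangular n) : Prop :=
  ∀ i j : Fin n, i < j → (fun t => toMatrix (f t) i j) ∈ polyFunDegLT (B ((j : ℕ) - i))

section EntryDegLT

variable {B : ℕ → ℕ} {f : ℝ≥0 → UpperUnitriangular n}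

theorem exists_entryDegLT (hf : ∀ i j, (fun t => toMatrix (f t) i j) ∈ polyFun) :
    ∃ c, EntryDegLT (c * ·) f := by
  choose b hb using fun ij : Fin n × Fin n => exists_mem_polyFunDegLT (hf ij.1 ij.2)
  obtain ⟨c, hc⟩ := Finite.exists_le b
  exact ⟨c, fun i j hij => polyFunDegLT_mono
    ((hc (i, j)).trans (Nat.le_mul_of_pos_right c (by omega))) (hb (i, j))⟩

theorem superadditive_split (hB : ∀ a b, B a + B b ≤ B (a + b)) {i k j : Fin n}
    (hik : i < k) (hkj : k < j) : B ((k : ℕ) - i) + B ((j : ℕ) - k) ≤ B ((j : ℕ) - i) := by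
  have := hB ((k : ℕ) - i) ((j : ℕ) - k)
  rwa [show (k : ℕ) - i + ((j : ℕ) - k) = (j : ℕ) - i by omega] at this

theorem EntryDegLT.shift_mul_inv (hB : ∀ a b, B a + B b ≤ B (a + b)) (hf : EntryDegLT B f)
    (s : ℝ≥0) : EntryDegLT (B · - 1) (fun t => f (s + t) * (f t)⁻¹) := by
  intro i j
  induction j using WellFoundedLT.induction with | ind j ihj => ?_
  intro hij
  have hterm : ∀ k ∈ Ioo i j, (fun t => toMatrix (f (s + t) * (f t)⁻¹) i k) *
      (fun t => toMatrix (f t) k j) ∈ polyFunDegLT (B ((j : ℕ) - i) - 1) := by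
    intro k hk
    obtain ⟨hik, hkj⟩ := mem_Ioo.1 hk
    have := superadditive_split hB hik hkj
    exact polyFunDegLT_mono (by dsimp only; omega)
      (mul_mem_polyFunDegLT (ihj k hkj hik) (hf k j hkj))
  convert sub_mem (shift_sub_mem_polyFunDegLT (hf i j hij) s) (sum_mem hterm) using 1
  funext t
  have := toMatrix_mul_apply_of_lt (f (s + t) * (f t)⁻¹) (f t) hij
  rw [inv_mul_cancel_right] at this
  simp only [this, Pi.sub_apply, Finset.sum_apply, Pi.mul_apply]
  ring

theorem EntryDegLT.inv_mul_shift (hB : ∀ a b, B a + B b ≤ B (a + b)) (hf : EntryDegLT B f)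
    (s : ℝ≥0) : EntryDegLT (B · - 1) (fun t => (f t)⁻¹ * f (s + t)) := by
  intro i
  induction i using WellFoundedGT.induction with | ind i ihi => ?_
  intro j hij
  have hterm : ∀ k ∈ Ioo i j, (fun t => toMatrix (f t) i k) *
      (fun t => toMatrix ((f t)⁻¹ * f (s + t)) k j) ∈ polyFunDegLT (B ((j : ℕ) - i) - 1) := by
    intro k hk
    obtain ⟨hik, hkj⟩ := mem_Ioo.1 hk
    have := superadditive_split hB hik hkj
    exact polyFunDegLT_mono (by dsimp only; omega)
      (mul_mem_polyFunDegLT (hf i k hik) (ihi k hik j hkj))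
  convert sub_mem (shift_sub_mem_polyFunDegLT (hf i j hij) s) (sum_mem hterm) using 1
  funext t
  have := toMatrix_mul_apply_of_lt (f t) ((f t)⁻¹ * f (s + t)) hij
  rw [mul_inv_cancel_left] at this
  simp only [this, Pi.sub_apply, Finset.sum_apply, Pi.mul_apply]
  ring

end EntryDegLT

theorem degLE_of_entryDegLT {k : ℕ} {B : ℕ → ℕ} (hB : ∀ a b, B a + B b ≤ B (a + b))
    (hBk : ∀ m < n, B m ≤ k + 1) {f : ℝ≥0 → UpperUnitriangular n} (hf : EntryDegLT B f) :
    DegLE k f := by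
  induction k generalizing B f with
  | zero =>
    intro t t'
    exact ext_toMatrix fun i j hij =>
      eq_of_mem_polyFunDegLT_one (polyFunDegLT_mono (hBk _ (by omega)) (hf i j hij)) t t'
  | succ k ih =>
    have hB' : ∀ a b, (B a - 1) + (B b - 1) ≤ B (a + b) - 1 := fun a b => by
      have := hB a b
      omega
    have hBk' : ∀ m < n, B m - 1 ≤ k + 1 := fun m hm => by
      have := hBk m hm
      omega
    exact fun s => ⟨ih hB' hBk' (hf.shift_mul_inv hB s), ih hB' hBk' (hf.inv_mul_shift hB s)⟩

end UpperUnitriangular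

theorem continuous_polynomial_map_unitriangular_iff (n : ℕ)
    (f : NNReal → ↥(UpperUnitriangular n)) :
    (Continuous f ∧ IsPoly f) ↔
      ∀ i j : Fin n, i < j → ∃ p : Polynomial ℝ, ∀ t : NNReal,
        ((f t : (Matrix (Fin n) (Fin n) ℝ)ˣ) : Matrix (Fin n) (Fin n) ℝ) i j
          = p.eval (t : ℝ) := by
  constructor
  · rintro ⟨hc, d, hd⟩ i j _
    exact mem_polyFun.1 (UpperUnitriangular.toMatrix_apply_mem_polyFun_of_degLE hc hd i j)
  · intro h
    have hpoly : ∀ i j, (fun t => UpperUnitriangular.toMatrix (f t) i j) ∈ polyFun := by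
      intro i j
      by_cases hij : i < j
      · exact mem_polyFun.2 (h i j hij)
      · exact UpperUnitriangular.toMatrix_apply_mem_polyFun_of_not_lt f hij
    obtain ⟨c, hc⟩ := UpperUnitriangular.exists_entryDegLT hpoly
    refine ⟨UpperUnitriangular.continuous_iff.2 fun i j => continuous_of_mem_polyFun (hpoly i j),
      c * n, UpperUnitriangular.degLE_of_entryDegLT (fun a b => (mul_add c a b).ge)
        (fun m hm => ?_) hc⟩
    exact (Nat.mul_le_mul_left c hm.le).trans (Nat.le_succ _)

end PaperPoly
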